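/- arXiv:2605.17168 — 8 statements merged into one kernel-verified Lean document; each statement's English description precedes it below -/
import Mathlib

section
/- Let A ∈ ℝ^{(n+1)×(n+1)} be a symmetric matrix with A_{00} = 0 that is conditionally negative semidefinite, i.e. x^⊤Ax ≤ 0 for every x ∈ ℝ^{n+1} whose entries sum to zero. Partition A as A = [[0, γ^⊤],[γ, Γ]] where γ ∈ ℝ^n is the vector of entries A_{i0} (i = 1,…,n) and Γ ∈ ℝ^{n×n} is the lower-right block. Then the matrix γ e^⊤ + e γ^⊤ − Γ is positive semidefinite, where e ∈ ℝ^n is the all-ones vector. -/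
open Matrix

/-- If a symmetric matrix `A` with `A 0 0 = 0` is conditionally negative semidefinite,
then with the partition `A = [[0, γᵀ],[γ, Γ]]` the matrix `γeᵀ + eγᵀ - Γ` is
positive semidefinite. -/
theorem posSemidef_of_conditionally_negative_semidefinite
    (n : ℕ) (A : Matrix (Fin (n + 1)) (Fin (n + 1)) ℝ)
    (hA : A.IsSymm) (hA00 : A 0 0 = 0)
    (hcnd : ∀ x : Fin (n + 1) → ℝ, ∑ k, x k = 0 → x ⬝ᵥ A.mulVec x ≤ 0) :
    (Matrix.of fun i j : Fin n => A i.succ 0 + A j.succ 0 - A i.succ j.succ).PosSemidef := by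
  constructor
  · rw [Matrix.IsHermitian]
    ext i j
    simp only [Matrix.conjTranspose_apply, Matrix.of_apply, star_trivial]
    rw [hA.apply j.succ i.succ]
    ring
  · intro y
    set s := ∑ i, y i with hs
    set x : Fin (n+1) → ℝ := Fin.cons (-s) y with hx
    have hsum : ∑ k, x k = 0 := by
      simp [hx, Fin.sum_cons, hs]
    have h := hcnd x hsum
    have key : (star y) ⬝ᵥ (Matrix.of fun i j : Fin n => A i.succ 0 + A j.succ 0 - A i.succ j.succ).mulVec y
        = -(x ⬝ᵥ A.mulVec x) := by
      simp only [dotProduct, mulVec, hx, Fin.sum_univ_succ, Fin.cons_zero, Fin.cons_succ,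
        hA00, Matrix.of_apply, star_trivial]
      have hsym : ∀ j : Fin n, A 0 j.succ = A j.succ 0 := fun j => hA.apply _ _
      simp only [hsym]
      have e1 : ∀ i : Fin n, (∑ j, (A i.succ 0 + A j.succ 0 - A i.succ j.succ) * y j)
          = A i.succ 0 * s + (∑ j, A j.succ 0 * y j) - ∑ j, A i.succ j.succ * y j := by
        intro i
        simp only [sub_mul, add_mul, Finset.sum_sub_distrib, Finset.sum_add_distrib,
          Finset.mul_sum, hs]
      simp only [e1, mul_add, mul_sub, Finset.sum_add_distrib, Finset.sum_sub_distrib,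
        zero_mul, zero_add, mul_neg, neg_mul]
      rw [← Finset.sum_mul, ← hs]
      simp only [Finset.sum_neg_distrib]
      ring
    suffices hy : 0 ≤ (star y) ⬝ᵥ (Matrix.of fun i j : Fin n => A i.succ 0 + A j.succ 0 - A i.succ j.succ).mulVec y by
      simpa [dotProduct, mulVec, Finsupp.sum_fintype, Finset.mul_sum, mul_assoc] using hy
    rw [key]
    linarith
end

section
/- Let n ≥ 2 and let Γ ∈ ℝ^{n×n} be a symmetric invertible matrix with zero diagonal (Γ_{ii} = 0) and strictly positive off-diagonal entries (Γ_{ij} > 0 for i ≠ j), which is conditionally negative semidefinite: x^⊤Γx ≤ 0 for every x ∈ ℝ^n whose entries sum to zero. Then Γ has exactly one strictly positive eigenvalue, and all of its remaining eigenvalues are strictly negative. Concretely, there is exactly one index i such that the i-th eigenvalue of the symmetric matrix Γ is positive, and the eigenvalue at every other index is strictly negative. -/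
open Matrix

/-- A symmetric invertible variogram matrix (zero diagonal, positive off-diagonal,
conditionally negative semidefinite) has exactly one strictly positive eigenvalue;
all remaining eigenvalues are strictly negative. -/
theorem variogram_matrix_one_positive_eigenvalue
    (n : ℕ) (hn : 2 ≤ n) (Γ : Matrix (Fin n) (Fin n) ℝ)
    (hΓ : Γ.IsHermitian) (hinv : IsUnit Γ.det)
    (hdiag : ∀ i, Γ i i = 0)
    (hoff : ∀ i j, i ≠ j → 0 < Γ i j)
    (hcnd : ∀ x : Fin n → ℝ, ∑ k, x k = 0 → x ⬝ᵥ Γ.mulVec x ≤ 0) :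
    ∃ i : Fin n, 0 < hΓ.eigenvalues i ∧ ∀ j : Fin n, j ≠ i → hΓ.eigenvalues j < 0 := by
  set μ := hΓ.eigenvalues with hμ
  -- all eigenvalues are nonzero
  have hdet : Γ.det ≠ 0 := hinv.ne_zero
  have hne : ∀ i, μ i ≠ 0 := by
    intro i hi
    apply hdet
    rw [hΓ.det_eq_prod_eigenvalues]
    exact Finset.prod_eq_zero (Finset.mem_univ i) (by exact_mod_cast hi)
  -- the eigenvalues sum to the trace, which is zero
  have htr : ∑ i, μ i = 0 := by
    have h1 : Γ.trace = ∑ i, μ i := by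
      conv_lhs => rw [hΓ.spectral_theorem]
      rw [Unitary.conjStarAlgAut_apply, trace_mul_cycle, (Matrix.mem_unitaryGroup_iff').mp (hΓ.eigenvectorUnitary).2,
        one_mul]
      simp [Matrix.trace_diagonal, hμ]
    have h2 : Γ.trace = 0 := by
      simp [Matrix.trace, Matrix.diag, hdiag]
    rw [← h1, h2]
  -- eigenvectors are orthonormal w.r.t. the dot product
  have hdot : ∀ i j : Fin n, (⇑(hΓ.eigenvectorBasis i)) ⬝ᵥ (⇑(hΓ.eigenvectorBasis j))
      = if i = j then 1 else 0 := by
    intro i j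
    have h := hΓ.eigenvectorBasis.orthonormal
    rw [orthonormal_iff_ite] at h
    have := h i j
    simpa [PiLp.inner_apply, dotProduct, RCLike.inner_apply, mul_comm] using this
  -- quadratic form on a linear combination of two distinct eigenvectors
  have hq : ∀ (a b : ℝ) (i j : Fin n), i ≠ j →
      (a • ⇑(hΓ.eigenvectorBasis i) + b • ⇑(hΓ.eigenvectorBasis j)) ⬝ᵥ
        Γ.mulVec (a • ⇑(hΓ.eigenvectorBasis i) + b • ⇑(hΓ.eigenvectorBasis j))
      = a ^ 2 * μ i + b ^ 2 * μ j := by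
    intro a b i j hij
    rw [Matrix.mulVec_add, Matrix.mulVec_smul, Matrix.mulVec_smul,
      hΓ.mulVec_eigenvectorBasis, hΓ.mulVec_eigenvectorBasis]
    simp only [dotProduct_add, add_dotProduct, smul_dotProduct, dotProduct_smul,
      smul_eq_mul, hdot, hij, hij.symm, if_true, if_false, if_pos rfl]
    ring
  -- at most one positive eigenvalue
  have key : ∀ i j : Fin n, i ≠ j → 0 < μ i → ¬ 0 < μ j := by
    intro i j hij hi hj
    set v := ⇑(hΓ.eigenvectorBasis i) with hv
    set w := ⇑(hΓ.eigenvectorBasis j) with hw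
    set s := ∑ k, v k with hs
    set t := ∑ k, w k with ht
    by_cases hs0 : s = 0
    · -- use v itself
      have := hcnd v hs0
      have hqv := hq 1 0 i j hij
      simp only [one_smul, zero_smul, add_zero, one_pow, one_mul, zero_pow, zero_mul] at hqv
      rw [hqv] at this
      simp at this
      linarith
    · -- use t • v - s • w
      set x : Fin n → ℝ := t • v + (-s) • w with hx
      have hsum : ∑ k, x k = 0 := by
        simp only [hx, Pi.add_apply, Pi.smul_apply, smul_eq_mul, Pi.neg_apply]
        rw [Finset.sum_add_distrib, ← Finset.mul_sum, ← Finset.mul_sum, ← hs, ← ht]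
        ring
      have hqx := hq t (-s) i j hij
      have hle := hcnd x hsum
      rw [hqx] at hle
      have h1 : 0 < s ^ 2 * μ j := by positivity
      have h2 : 0 ≤ t ^ 2 * μ i := by positivity
      have : (-s) ^ 2 = s ^ 2 := by ring
      rw [this] at hle
      linarith
  -- existence of a positive eigenvalue
  have hex : ∃ i : Fin n, 0 < μ i := by
    by_contra h
    push_neg at h
    have hneg : ∀ i, μ i < 0 := fun i => lt_of_le_of_ne (h i) (hne i)
    have hlt : ∑ i, μ i < 0 :=
      Finset.sum_neg (fun i _ => hneg i) ⟨⟨0, by omega⟩, Finset.mem_univ _⟩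
    linarith
  obtain ⟨i, hi⟩ := hex
  refine ⟨i, hi, fun j hj => ?_⟩
  have := key i j (Ne.symm hj) hi
  exact lt_of_le_of_ne (not_lt.mp this) (hne j)
end

section
/- Let Γ ∈ ℝ^{n×n} be symmetric, γ ∈ ℝ^n, and δ ∈ ℝ. Suppose L_0 ∈ ℝ^{n×n} satisfies L_0 L_0^⊤ = δ·ee^⊤ − Γ, the vector r ∈ ℝ^n satisfies L_0 r = δe − γ, and ρ ∈ ℝ satisfies ρ² = δ − ‖r‖². Let M ∈ ℝ^{(n+1)×(n+1)} be the block matrix M = [[ρ, r^⊤],[0, L_0]] and let D = [−e | I] ∈ ℝ^{n×(n+1)}. Then γe^⊤ + eγ^⊤ − Γ = (D M)(D M)^⊤. -/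
/-!
Each row of `D` subtracts the first row of `M`, so the `i`-th row of `DM` is `(-ρ, L₀ᵢ - rᵀ)`.
Expanding the Gram entries `ρ² + (L₀ᵢ - r) ⬝ (L₀ⱼ - r)` and inserting the three defining identities
for `L₀`, `r` and `ρ` leaves `γᵢ + γⱼ - Γᵢⱼ`.
-/

open Matrix

section

variable {R : Type*} [CommRing R]

theorem sub_dotProduct_sub {ι : Type*} [Fintype ι] (u v w : ι → R) :
    (u - w) ⬝ᵥ (v - w) = u ⬝ᵥ v - u ⬝ᵥ w - v ⬝ᵥ w + w ⬝ᵥ w := by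
  rw [sub_dotProduct, dotProduct_sub, dotProduct_sub, dotProduct_comm w v]
  ring

theorem mul_transpose_self_apply {m ι : Type*} [Fintype ι] (A : Matrix m ι R) (i j : m) :
    (A * Aᵀ) i j = A i ⬝ᵥ A j :=
  rfl

theorem mul_row_eq_row_succ_sub_row_zero {n : ℕ} {ι : Type*}
    (D : Matrix (Fin n) (Fin (n + 1)) R)
    (hD : ∀ i j, D i j = Fin.cases (-1 : R) (fun j' => if i = j' then 1 else 0) j)
    (M : Matrix (Fin (n + 1)) ι R) (i : Fin n) :
    (D * M) i = M i.succ - M 0 := by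
  ext k
  simp [mul_apply, hD, Fin.sum_univ_succ, ite_mul, sub_eq_neg_add]

end

/-- Twisted Cholesky factorization of the intrinsic-random-field covariance:
if `L₀L₀ᵀ = δeeᵀ - Γ`, `L₀r = δe - γ` and `ρ² = δ - ‖r‖²`, then with
`M = [[ρ, rᵀ],[0, L₀]]` and `D = [-e | I]` one has
`γeᵀ + eγᵀ - Γ = (DM)(DM)ᵀ`. -/
theorem twisted_factorization_of_IRF_covariance
    (n : ℕ) (Γ : Matrix (Fin n) (Fin n) ℝ) (γ : Fin n → ℝ) (δ : ℝ)
    (L0 : Matrix (Fin n) (Fin n) ℝ)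
    (hL0 : L0 * L0ᵀ = Matrix.of fun i j : Fin n => δ - Γ i j)
    (r : Fin n → ℝ) (hr : L0.mulVec r = fun i => δ - γ i)
    (ρ : ℝ) (hρ : ρ ^ 2 = δ - ∑ i, r i ^ 2)
    (M : Matrix (Fin (n + 1)) (Fin (n + 1)) ℝ)
    (hM : ∀ i j, M i j =
      Fin.cases (Fin.cases ρ (fun j' => r j') j)
        (fun i' => Fin.cases (0 : ℝ) (fun j' => L0 i' j') j) i)
    (D : Matrix (Fin n) (Fin (n + 1)) ℝ)
    (hD : ∀ i j, D i j = Fin.cases (-1 : ℝ) (fun j' => if i = j' then 1 else 0) j) :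
    (Matrix.of fun i j : Fin n => γ i + γ j - Γ i j) = (D * M) * (D * M)ᵀ := by
  have hM_zero : M 0 = vecCons ρ r := funext fun k => hM 0 k
  have hM_succ (i : Fin n) : M i.succ = vecCons 0 (L0 i) := funext fun k => hM i.succ k
  have hDM (i : Fin n) : (D * M) i = vecCons (-ρ) (L0 i - r) := by
    rw [mul_row_eq_row_succ_sub_row_zero D hD, hM_zero, hM_succ, cons_sub_cons, zero_sub]
  have hLr (i : Fin n) : L0 i ⬝ᵥ r = δ - γ i := congrFun hr i
  have hrr : r ⬝ᵥ r = ∑ i, r i ^ 2 := by simp only [dotProduct, sq]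
  ext i j
  have hLL : L0 i ⬝ᵥ L0 j = δ - Γ i j := congrFun (congrFun hL0 i) j
  rw [of_apply, mul_transpose_self_apply, hDM, hDM, cons_dotProduct_cons, sub_dotProduct_sub,
    hLL, hLr, hLr, hrr, neg_mul_neg, ← sq, hρ]
  ring
end

section
/- Let S, M ∈ ℝ^{n×n} be symmetric positive definite matrices, let X = [0 | I] ∈ ℝ^{n×(n+1)} and D = [−e | I] ∈ ℝ^{n×(n+1)}, where e ∈ ℝ^n is the all-ones vector, and set W = X^⊤S^{-1}X + D^⊤M^{-1}D. Then for every k = 1, …, n: e_1^⊤ W^{-1} X^⊤ S^{-1} e_k = (e^⊤(S+M)^{-1}e_k) / (e^⊤(S+M)^{-1}e), where e_1 ∈ ℝ^{n+1} is the first standard basis vector and e_k ∈ ℝ^n is the k-th standard basis vector (the denominator e^⊤(S+M)^{-1}e is strictly positive since S+M is positive definite). -/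
open Matrix

/-- Rational form of the IGP Kriging coefficients: with `W = XᵀS⁻¹X + DᵀM⁻¹D`,
for each `k` one has `e₁ᵀ W⁻¹ Xᵀ S⁻¹ e_k = eᵀ(S+M)⁻¹e_k / eᵀ(S+M)⁻¹e`. -/
theorem IGP_kriging_coefficient_rational_form
    (n : ℕ) (S M : Matrix (Fin n) (Fin n) ℝ)
    (hS : S.PosDef) (hM : M.PosDef)
    (X : Matrix (Fin n) (Fin (n + 1)) ℝ)
    (hX : ∀ i j, X i j = Fin.cases (0 : ℝ) (fun j' => if i = j' then 1 else 0) j)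
    (D : Matrix (Fin n) (Fin (n + 1)) ℝ)
    (hD : ∀ i j, D i j = Fin.cases (-1 : ℝ) (fun j' => if i = j' then 1 else 0) j)
    (W : Matrix (Fin (n + 1)) (Fin (n + 1)) ℝ)
    (hW : W = Xᵀ * S⁻¹ * X + Dᵀ * M⁻¹ * D)
    (k : Fin n) :
    Pi.single (0 : Fin (n + 1)) (1 : ℝ) ⬝ᵥ (W⁻¹ * Xᵀ * S⁻¹).mulVec (Pi.single k 1)
      = ((fun _ => (1 : ℝ)) ⬝ᵥ (S + M)⁻¹.mulVec (Pi.single k 1))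
        / ((fun _ => (1 : ℝ)) ⬝ᵥ (S + M)⁻¹.mulVec (fun _ => (1 : ℝ))) := by
  have hn : 0 < n := k.pos
  set e : Fin n → ℝ := fun _ => 1 with he
  set P : Matrix (Fin n) (Fin n) ℝ := (S + M)⁻¹ with hP
  have hSM : (S + M).PosDef := hS.add hM
  have hPpd : P.PosDef := hSM.inv
  have he0 : e ≠ 0 := by
    intro h
    have := congrFun h k
    simp [he] at this
  -- symmetry facts
  have symm_of : ∀ (A : Matrix (Fin n) (Fin n) ℝ), A.PosDef → Aᵀ = A := by
    intro A hA
    rw [← conjTranspose_eq_transpose_of_trivial]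
    exact hA.isHermitian.eq
  have hSsym : Sᵀ = S := symm_of S hS
  have hPsym : Pᵀ = P := symm_of P hPpd
  have hSisym : S⁻¹ᵀ = S⁻¹ := by rw [transpose_nonsing_inv, hSsym]
  have hMisym : M⁻¹ᵀ = M⁻¹ := by rw [transpose_nonsing_inv, symm_of M hM]
  -- invertibility facts
  have hSdet : IsUnit S.det := hS.det_pos.ne'.isUnit
  have hMdet : IsUnit M.det := hM.det_pos.ne'.isUnit
  have hSMdet : IsUnit (S + M).det := hSM.det_pos.ne'.isUnit
  set w : Fin n → ℝ := P *ᵥ e with hw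
  set s : ℝ := e ⬝ᵥ w with hs
  have hse : star e = e := by funext i; simp
  have hspos : 0 < s := by
    have := hPpd.dotProduct_mulVec_pos he0
    rwa [hse] at this
  set z : Fin (n + 1) → ℝ := Fin.cons (1 / s) (fun i => (1 / s) * (S *ᵥ w) i) with hz
  -- action of X and D on z
  have hXz : X *ᵥ z = (1 / s) • (S *ᵥ w) := by
    funext i
    simp only [mulVec, dotProduct, Pi.smul_apply, smul_eq_mul]
    rw [Fin.sum_univ_succ]
    simp [hX, hz, Fin.cons_succ, Fin.cons_zero, ite_mul, Finset.sum_ite_eq, mulVec, dotProduct]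
  have hDz : D *ᵥ z = (1 / s) • (S *ᵥ w) - (1 / s) • e := by
    funext i
    simp only [mulVec, dotProduct, Pi.sub_apply, Pi.smul_apply, smul_eq_mul]
    rw [Fin.sum_univ_succ]
    simp [hD, hz, Fin.cons_succ, Fin.cons_zero, ite_mul, Finset.sum_ite_eq, he, mulVec, dotProduct]
    ring
  have hSww : S⁻¹ *ᵥ (S *ᵥ w) = w := by
    rw [mulVec_mulVec, nonsing_inv_mul S hSdet, one_mulVec]
  have hSMw : (S + M) *ᵥ w = e := by
    rw [hw, hP, mulVec_mulVec, mul_nonsing_inv _ hSMdet, one_mulVec]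
  have hSwe : S *ᵥ w - e = -(M *ᵥ w) := by
    rw [← hSMw, add_mulVec]; abel
  -- W z = e₁
  have hWz : W *ᵥ z = Pi.single (0 : Fin (n + 1)) (1 : ℝ) := by
    rw [hW, add_mulVec, ← mulVec_mulVec, ← mulVec_mulVec, ← mulVec_mulVec, ← mulVec_mulVec,
      hXz, hDz, mulVec_smul, hSww]
    have : M⁻¹ *ᵥ ((1 / s) • (S *ᵥ w) - (1 / s) • e) = -((1 / s) • w) := by
      rw [← smul_sub, mulVec_smul, hSwe, mulVec_neg, mulVec_mulVec,
        nonsing_inv_mul M hMdet, one_mulVec, smul_neg]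
    rw [this]
    funext j
    induction j using Fin.cases with
    | zero =>
      simp only [mulVec, dotProduct, transpose_apply, Pi.add_apply, Pi.neg_apply,
        Pi.smul_apply, smul_eq_mul]
      rw [Pi.single_eq_same]
      have h1 : ∑ i, X i 0 * ((1 / s) • w) i = 0 := by
        simp [hX]
      have h2 : ∑ i, D i 0 * (-((1 / s) • w)) i = 1 := by
        simp only [hD, Fin.cases_zero, Pi.neg_apply, Pi.smul_apply, smul_eq_mul,
          neg_mul, one_mul, mul_neg, neg_neg]
        rw [← Finset.mul_sum]
        have : ∑ i, w i = s := by
          rw [hs]; simp [dotProduct, he]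
        rw [this]
        field_simp
      simpa using congrArg₂ (· + ·) h1 h2
    | succ j' =>
      simp only [mulVec, dotProduct, transpose_apply, Pi.add_apply, Pi.neg_apply,
        Pi.smul_apply, smul_eq_mul]
      rw [Pi.single_eq_of_ne (by simp [Fin.ext_iff])]
      simp [hX, hD, ite_mul, Finset.sum_ite_eq']
  -- W is positive definite
  have hWpd : W.PosDef := by
    refine PosDef.of_dotProduct_mulVec_pos ?_ ?_
    · show Wᴴ = W
      rw [conjTranspose_eq_transpose_of_trivial, hW]
      simp only [transpose_add, transpose_mul, transpose_transpose, hSisym, hMisym,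
        Matrix.mul_assoc]
    · intro x hx
      have hsx : star x = x := by funext i; simp
      rw [hsx, hW, add_mulVec, dotProduct_add, ← mulVec_mulVec, ← mulVec_mulVec,
        ← mulVec_mulVec, ← mulVec_mulVec, dotProduct_mulVec x Xᵀ, dotProduct_mulVec x Dᵀ,
        ← mulVec_transpose, ← mulVec_transpose, transpose_transpose, transpose_transpose]
      have hXx : X *ᵥ x = fun i => x i.succ := by
        funext i
        simp only [mulVec, dotProduct]
        rw [Fin.sum_univ_succ]
        simp [hX, ite_mul, Finset.sum_ite_eq]
      have hDx : D *ᵥ x = fun i => -x 0 + x i.succ := by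
        funext i
        simp only [mulVec, dotProduct]
        rw [Fin.sum_univ_succ]
        simp [hD, ite_mul, Finset.sum_ite_eq]
      by_cases hxs : (fun i : Fin n => x i.succ) = 0
      · have hx0 : x 0 ≠ 0 := by
          intro h0
          apply hx
          funext j
          induction j using Fin.cases with
          | zero => exact h0
          | succ j' => exact congrFun hxs j'
        have hDx0 : D *ᵥ x ≠ 0 := by
          rw [hDx]
          intro h
          have h1 : -x 0 + x (Fin.succ ⟨0, hn⟩) = 0 := congrFun h ⟨0, hn⟩
          have h2 : x (Fin.succ ⟨0, hn⟩) = 0 := congrFun hxs ⟨0, hn⟩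
          rw [h2, add_zero, neg_eq_zero] at h1
          exact hx0 h1
        have h1 : X *ᵥ x ⬝ᵥ S⁻¹ *ᵥ (X *ᵥ x) = 0 := by
          rw [hXx, hxs]; simp
        have h2 : 0 < D *ᵥ x ⬝ᵥ M⁻¹ *ᵥ (D *ᵥ x) := by
          have := hM.inv.dotProduct_mulVec_pos hDx0
          rwa [show star (D *ᵥ x) = D *ᵥ x by funext i; simp] at this
        rw [h1]; linarith
      · have hXx0 : X *ᵥ x ≠ 0 := by rw [hXx]; exact hxs
        have h1 : 0 < X *ᵥ x ⬝ᵥ S⁻¹ *ᵥ (X *ᵥ x) := by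
          have := hS.inv.dotProduct_mulVec_pos hXx0
          rwa [show star (X *ᵥ x) = X *ᵥ x by funext i; simp] at this
        have h2 : 0 ≤ D *ᵥ x ⬝ᵥ M⁻¹ *ᵥ (D *ᵥ x) := by
          have := hM.inv.posSemidef.dotProduct_mulVec_nonneg (D *ᵥ x)
          rwa [show star (D *ᵥ x) = D *ᵥ x by funext i; simp] at this
        linarith
  have hWdet : IsUnit W.det := hWpd.det_pos.ne'.isUnit
  have hWsym : Wᵀ = W := by
    rw [← conjTranspose_eq_transpose_of_trivial]; exact hWpd.isHermitian.eq
  have hzW : z ᵥ* W = Pi.single (0 : Fin (n + 1)) (1 : ℝ) := by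
    rw [← mulVec_transpose, hWsym]; exact hWz
  have hzinv : Pi.single (0 : Fin (n + 1)) (1 : ℝ) ᵥ* W⁻¹ = z := by
    rw [← hzW, vecMul_vecMul, mul_nonsing_inv W hWdet, vecMul_one]
  have hvS : ∀ u : Fin n → ℝ, u ᵥ* S⁻¹ = S⁻¹ *ᵥ u := by
    intro u
    conv_lhs => rw [← hSisym]
    rw [vecMul_transpose]
  rw [dotProduct_mulVec, ← vecMul_vecMul, ← vecMul_vecMul, hzinv, vecMul_transpose, hXz,
    hvS, mulVec_smul, hSww]
  have hnum : e ⬝ᵥ (P *ᵥ Pi.single k 1) = w k := by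
    have h1 : P *ᵥ Pi.single k 1 = fun i => P i k := by
      funext i; simp [mulVec_single]
    rw [h1, hw]
    simp only [dotProduct, mulVec, he, one_mul, mul_one]
    refine Finset.sum_congr rfl fun i _ => ?_
    simpa using congrFun (congrFun hPsym k) i
  rw [hnum]
  simp only [Pi.smul_apply, smul_eq_mul, dotProduct_single, mul_one]
  ring
end

section
/- Let Γ ∈ ℝ^{n×n} be symmetric and invertible with e^⊤Γ^{-1}e ≠ 0, let γ ∈ ℝ^n, and let F ∈ ℝ^{n×n} be arbitrary. For σ > 0 define N(σ) = (σ²FF^⊤ − Γ)^{-1} and λ_k(σ) = (1 + γ^⊤N(σ)e)·(e^⊤N(σ)e_k)/(e^⊤N(σ)e) − γ^⊤N(σ)e_k. Then as σ → 0 from the right, λ_k(σ) converges to λ_k^0 = γ^⊤Γ^{-1}e_k + (1 − e^⊤Γ^{-1}γ)·(e^⊤Γ^{-1}e_k)/(e^⊤Γ^{-1}e), for every k = 1, …, n. -/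
/-!
The map `σ ↦ σ²FFᵀ - Γ` is continuous with invertible value `-Γ` at `σ = 0`, so by continuity
of matrix inversion at invertible matrices `N(σ) → -Γ⁻¹`. The coefficient `λ_k` is a rational
function of `N(σ)` whose denominator `eᵀ(-Γ⁻¹)e` is nonzero, hence continuous there, and its value
at `-Γ⁻¹` rearranges to `λ_k⁰` using the symmetry of `Γ⁻¹`.
-/

open Matrix Filter Topology

namespace Matrix

variable {ι K : Type*} [Fintype ι] [Field K]

/-- The paper's `λ_k` as a function of the matrix `M = N(σ)`, with `e` and `v = e_k` general. -/
def krigingCoeff (γ e v : ι → K) (M : Matrix ι ι K) : K :=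
  (1 + γ ⬝ᵥ M *ᵥ e) * (e ⬝ᵥ M *ᵥ v) / (e ⬝ᵥ M *ᵥ e) - γ ⬝ᵥ M *ᵥ v

theorem IsSymm.dotProduct_mulVec_comm {A : Matrix ι ι K} (hA : A.IsSymm) (u v : ι → K) :
    u ⬝ᵥ A *ᵥ v = v ⬝ᵥ A *ᵥ u := by
  rw [dotProduct_mulVec, ← mulVec_transpose, hA.eq, dotProduct_comm]

theorem krigingCoeff_neg_of_isSymm {G : Matrix ι ι K} (hG : G.IsSymm) (γ e v : ι → K) :
    krigingCoeff γ e v (-G) =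
      γ ⬝ᵥ G *ᵥ v + (1 - e ⬝ᵥ G *ᵥ γ) * (e ⬝ᵥ G *ᵥ v) / (e ⬝ᵥ G *ᵥ e) := by
  simp only [krigingCoeff, neg_mulVec, dotProduct_neg, hG.dotProduct_mulVec_comm γ e, div_neg]
  ring

theorem continuousAt_krigingCoeff [TopologicalSpace K] [IsTopologicalDivisionRing K]
    (γ e v : ι → K) {M : Matrix ι ι K} (hM : e ⬝ᵥ M *ᵥ e ≠ 0) :
    ContinuousAt (krigingCoeff γ e v) M := by
  have hbilin : ∀ u w : ι → K, Continuous fun A : Matrix ι ι K => u ⬝ᵥ A *ᵥ w := fun u w =>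
    continuous_const.dotProduct (continuous_id.matrix_mulVec continuous_const)
  exact ((continuous_const.add (hbilin γ e)).mul (hbilin e v)).continuousAt.div
    (hbilin e e).continuousAt hM |>.sub (hbilin γ v).continuousAt

variable [DecidableEq ι]

theorem inv_neg_of_isUnit_det {A : Matrix ι ι K} (hA : IsUnit A.det) : (-A)⁻¹ = -A⁻¹ :=
  inv_eq_right_inv (by rw [neg_mul_neg, mul_nonsing_inv A hA])

theorem continuousAt_inv_of_isUnit_det [TopologicalSpace K] [IsTopologicalDivisionRing K]
    {A : Matrix ι ι K} (hA : IsUnit A.det) : ContinuousAt Inv.inv A :=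
  continuousAt_matrix_inv A (Ring.inverse_eq_inv' (G₀ := K) ▸ continuousAt_inv₀ hA.ne_zero)

theorem tendsto_inv_sq_smul_sub [TopologicalSpace K] [IsTopologicalDivisionRing K]
    (A : Matrix ι ι K) {B : Matrix ι ι K} (hB : IsUnit B.det) :
    Tendsto (fun σ : K => (σ ^ 2 • A - B)⁻¹) (𝓝 0) (𝓝 (-B⁻¹)) := by
  have hpath : Tendsto (fun σ : K => σ ^ 2 • A - B) (𝓝 0) (𝓝 (-B)) := by
    simpa using (((continuous_pow 2).smul continuous_const).sub continuous_const).tendsto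
      (f := fun σ : K => σ ^ 2 • A - B) 0
  have hnegB : IsUnit (-B).det := by
    rw [det_neg]; exact ((isUnit_neg_one (α := K)).pow _).mul hB
  rw [← inv_neg_of_isUnit_det hB]
  exact (continuousAt_inv_of_isUnit_det hnegB).tendsto.comp hpath

end Matrix

/-- Noise-free limit of the IGP Kriging coefficients: as the observation noise
`σ → 0⁺`, the Kriging coefficient `λ_k(σ)` computed from `N(σ) = (σ²FFᵀ - Γ)⁻¹`
converges to `λ_k⁰ = γᵀΓ⁻¹e_k + (1 - eᵀΓ⁻¹γ)·(eᵀΓ⁻¹e_k)/(eᵀΓ⁻¹e)`. -/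
theorem kriging_coefficient_noise_free_limit
    (n : ℕ) (Γ : Matrix (Fin n) (Fin n) ℝ) (hΓ : Γ.IsSymm) (hinv : IsUnit Γ.det)
    (hΓe : (fun _ => (1 : ℝ)) ⬝ᵥ Γ⁻¹.mulVec (fun _ => (1 : ℝ)) ≠ 0)
    (γ : Fin n → ℝ) (F : Matrix (Fin n) (Fin n) ℝ)
    (N : ℝ → Matrix (Fin n) (Fin n) ℝ)
    (hN : ∀ σ : ℝ, N σ = (σ ^ 2 • (F * Fᵀ) - Γ)⁻¹)
    (k : Fin n) :
    Filter.Tendsto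
      (fun σ : ℝ =>
        (1 + γ ⬝ᵥ (N σ).mulVec (fun _ => (1 : ℝ)))
            * ((fun _ => (1 : ℝ)) ⬝ᵥ (N σ).mulVec (Pi.single k 1))
            / ((fun _ => (1 : ℝ)) ⬝ᵥ (N σ).mulVec (fun _ => (1 : ℝ)))
          - γ ⬝ᵥ (N σ).mulVec (Pi.single k 1))
      (nhdsWithin 0 (Set.Ioi 0))
      (nhds (γ ⬝ᵥ Γ⁻¹.mulVec (Pi.single k 1)
        + (1 - (fun _ => (1 : ℝ)) ⬝ᵥ Γ⁻¹.mulVec γ)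
            * ((fun _ => (1 : ℝ)) ⬝ᵥ Γ⁻¹.mulVec (Pi.single k 1))
            / ((fun _ => (1 : ℝ)) ⬝ᵥ Γ⁻¹.mulVec (fun _ => (1 : ℝ))))) := by
  have hN0 : Tendsto N (𝓝[>] 0) (𝓝 (-Γ⁻¹)) := by
    rw [funext hN]
    exact (tendsto_inv_sq_smul_sub (F * Fᵀ) hinv).mono_left nhdsWithin_le_nhds
  have hden : (fun _ => (1 : ℝ)) ⬝ᵥ (-Γ⁻¹) *ᵥ (fun _ => (1 : ℝ)) ≠ 0 := by
    simpa only [neg_mulVec, dotProduct_neg, neg_ne_zero] using hΓe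
  have hlim := (continuousAt_krigingCoeff γ _ (Pi.single k 1) hden).tendsto.comp hN0
  rwa [krigingCoeff_neg_of_isSymm hΓ.inv] at hlim
end

section
/- Let n ≥ 1, let ĝ ∈ ℝ^{n×n} be a symmetric matrix with zero diagonal and strictly positive off-diagonal entries (the surrogate variogram evaluated between observation locations), let ĥ ∈ ℝ^n have strictly positive entries (the surrogate variogram evaluated between the target location and each observation location), and let c ∈ ℝ^n have strictly positive entries. For ρ > 0, define R(ρ) ∈ ℝ^{n×n} by R(ρ)_{ij} = ρ/(ρ + ĝ_{ij}) (so R(ρ)_{ii} = 1), define r(ρ) ∈ ℝ^n by r(ρ)_i = ρ/(ρ + ĥ_i), and define the rational Kriging coefficient λ_k(ρ) = (r(ρ)^⊤ R(ρ)^{-1} e_k)·(e_k^⊤ R(ρ) c)/(r(ρ)^⊤ c). Then, for each k, as ρ → 0 from the right, λ_k(ρ) converges to the Shepard/inverse-distance weight (c_k/ĥ_k) / (Σ_{ℓ=1}^n c_ℓ/ĥ_ℓ). -/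
open Matrix

/-- As `ρ → 0⁺`, the rational Kriging coefficient
`λ_k(ρ) = (r(ρ)ᵀ R(ρ)⁻¹ e_k)·(e_kᵀ R(ρ) c)/(r(ρ)ᵀ c)` converges to the
Shepard/inverse-distance weight `(c_k/ĥ_k)/(∑_ℓ c_ℓ/ĥ_ℓ)`. -/
theorem rational_kriging_tendsto_shepard_weight
    (n : ℕ) (hn : 1 ≤ n)
    (ghat : Matrix (Fin n) (Fin n) ℝ) (hgsym : ghat.IsSymm)
    (hgdiag : ∀ i, ghat i i = 0) (hgoff : ∀ i j, i ≠ j → 0 < ghat i j)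
    (hhat : Fin n → ℝ) (hh : ∀ i, 0 < hhat i)
    (c : Fin n → ℝ) (hc : ∀ i, 0 < c i)
    (R : ℝ → Matrix (Fin n) (Fin n) ℝ)
    (hR : ∀ ρ i j, R ρ i j = ρ / (ρ + ghat i j))
    (r : ℝ → Fin n → ℝ)
    (hr : ∀ ρ i, r ρ i = ρ / (ρ + hhat i))
    (k : Fin n) :
    Filter.Tendsto
      (fun ρ : ℝ =>
        (r ρ ⬝ᵥ (R ρ)⁻¹.mulVec (Pi.single k 1))
          * (Pi.single k (1 : ℝ) ⬝ᵥ (R ρ).mulVec c) / (r ρ ⬝ᵥ c))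
      (nhdsWithin 0 (Set.Ioi 0))
      (nhds ((c k / hhat k) / ∑ ℓ, c ℓ / hhat ℓ)) := by
  classical
  -- auxiliary continuous-at-0 versions
  set M : ℝ → Matrix (Fin n) (Fin n) ℝ :=
    fun ρ i j => if i = j then 1 else ρ / (ρ + ghat i j) with hM
  set s : ℝ → Fin n → ℝ := fun ρ i => 1 / (ρ + hhat i) with hs
  have hM0 : M 0 = 1 := by
    ext i j
    by_cases h : i = j
    · simp [hM, h, Matrix.one_apply]
    · simp [hM, h, Matrix.one_apply, (hgoff i j h).ne']
  -- M is continuous at 0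
  have hMcont : Filter.Tendsto M (nhds 0) (nhds (1 : Matrix (Fin n) (Fin n) ℝ)) := by
    rw [← hM0]
    refine tendsto_pi_nhds.2 fun i => tendsto_pi_nhds.2 fun j => ?_
    by_cases h : i = j
    · simp only [hM, h, if_true]
      exact tendsto_const_nhds
    · simp only [hM, h, if_false]
      exact (continuousAt_id.div (continuousAt_id.add continuousAt_const)
        (by simpa using (hgoff i j h).ne')).tendsto
  -- inverse is continuous at 1
  have hMinv : Filter.Tendsto (fun ρ => (M ρ)⁻¹) (nhds 0)
      (nhds (1 : Matrix (Fin n) (Fin n) ℝ)) := by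
    have h1 : ContinuousAt Inv.inv (M 0) := by
      apply continuousAt_matrix_inv
      rw [hM0]
      simp only [Matrix.det_one]
      have h2 : (Ring.inverse : ℝ → ℝ) = Inv.inv := Ring.inverse_eq_inv'
      rw [h2]
      exact continuousAt_inv₀ one_ne_zero
    have := (h1.tendsto).comp (hM0 ▸ hMcont)
    simpa [hM0, Function.comp_def] using this
  have hscont : Filter.Tendsto s (nhds 0) (nhds (fun i => 1 / hhat i)) := by
    refine tendsto_pi_nhds.2 fun i => ?_
    have : ContinuousAt (fun ρ : ℝ => 1 / (ρ + hhat i)) 0 :=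
      continuousAt_const.div (continuousAt_id.add continuousAt_const)
        (by simpa using (hh i).ne')
    simpa [hs, one_div] using this.tendsto
  -- the denominator limit
  have hden : (0:ℝ) < ∑ ℓ, c ℓ / hhat ℓ := by
    haveI : Nonempty (Fin n) := ⟨⟨0, hn⟩⟩
    exact Finset.sum_pos (fun i _ => div_pos (hc i) (hh i)) Finset.univ_nonempty
  -- limits of the three pieces
  have hnum1 : Filter.Tendsto (fun ρ => s ρ ⬝ᵥ (M ρ)⁻¹.mulVec (Pi.single k 1))
      (nhds 0) (nhds (1 / hhat k)) := by
    have : Filter.Tendsto (fun ρ => s ρ ⬝ᵥ (M ρ)⁻¹.mulVec (Pi.single k 1))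
        (nhds 0) (nhds ((fun i => 1 / hhat i) ⬝ᵥ
          (1 : Matrix (Fin n) (Fin n) ℝ).mulVec (Pi.single k 1))) := by
      simp only [Matrix.mulVec, dotProduct]
      refine tendsto_finset_sum _ fun i _ => ((tendsto_pi_nhds.1 hscont i).mul ?_)
      refine tendsto_finset_sum _ fun j _ => ?_
      exact (tendsto_pi_nhds.1 (tendsto_pi_nhds.1 hMinv i) j).mul tendsto_const_nhds
    have hval : ((fun i => 1 / hhat i) ⬝ᵥ
        (1 : Matrix (Fin n) (Fin n) ℝ).mulVec (Pi.single k 1)) = 1 / hhat k := by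
      rw [Matrix.one_mulVec, dotProduct_single, mul_one]
    rw [← hval]; exact this
  have hnum2 : Filter.Tendsto (fun ρ => (Pi.single k (1:ℝ)) ⬝ᵥ (M ρ).mulVec c)
      (nhds 0) (nhds (c k)) := by
    have : Filter.Tendsto (fun ρ => (Pi.single k (1:ℝ)) ⬝ᵥ (M ρ).mulVec c)
        (nhds 0) (nhds ((Pi.single k (1:ℝ)) ⬝ᵥ
          (1 : Matrix (Fin n) (Fin n) ℝ).mulVec c)) := by
      simp only [Matrix.mulVec, dotProduct]
      refine tendsto_finset_sum _ fun i _ => ?_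
      refine tendsto_const_nhds.mul ?_
      refine tendsto_finset_sum _ fun j _ => ?_
      exact (tendsto_pi_nhds.1 (tendsto_pi_nhds.1 hMcont i) j).mul tendsto_const_nhds
    simpa [Matrix.one_mulVec, single_dotProduct] using this
  have hden2 : Filter.Tendsto (fun ρ => s ρ ⬝ᵥ c) (nhds 0)
      (nhds (∑ ℓ, c ℓ / hhat ℓ)) := by
    have hval : ((fun i => 1 / hhat i) ⬝ᵥ c) = ∑ ℓ, c ℓ / hhat ℓ := by
      simp only [dotProduct]
      exact Finset.sum_congr rfl fun i _ => by ring
    rw [← hval]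
    simp only [dotProduct]
    exact tendsto_finset_sum _ fun i _ => (tendsto_pi_nhds.1 hscont i).mul tendsto_const_nhds
  -- the full auxiliary function tendsto
  have hF : Filter.Tendsto
      (fun ρ => (s ρ ⬝ᵥ (M ρ)⁻¹.mulVec (Pi.single k 1))
        * (Pi.single k (1:ℝ) ⬝ᵥ (M ρ).mulVec c) / (s ρ ⬝ᵥ c))
      (nhds 0) (nhds ((c k / hhat k) / ∑ ℓ, c ℓ / hhat ℓ)) := by
    have := (hnum1.mul hnum2).div hden2 hden.ne'
    convert this using 2
    · rfl
    · ring
  -- restrict to the right filter and show eventual equality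
  refine ((hF.mono_left nhdsWithin_le_nhds).congr' ?_)
  filter_upwards [self_mem_nhdsWithin] with ρ (hρ : 0 < ρ)
  have hRM : R ρ = M ρ := by
    ext i j
    by_cases h : i = j
    · simp [hR, hM, h, hgdiag, hρ.ne']
    · simp [hR, hM, h]
  have hrs : r ρ = fun i => ρ * s ρ i := by
    funext i
    rw [hr, hs]
    field_simp
  have hdot : ∀ v : Fin n → ℝ, r ρ ⬝ᵥ v = ρ * (s ρ ⬝ᵥ v) := by
    intro v
    rw [hrs]
    simp [dotProduct, Finset.mul_sum, mul_assoc]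
  rw [hRM, hdot, hdot, mul_assoc, mul_div_mul_left _ _ hρ.ne']
end

section
/- Let P ∈ ℝ^{n×n} be symmetric positive definite, let w ∈ ℝ^n, and let e ∈ ℝ^n be the all-ones vector. Suppose f := e^⊤P^{-1}w > 0, and set g := w^⊤P^{-1}w and h := (f + g)/f². Then the matrix M = P + h·ee^⊤ − (1/f)·we^⊤ − (1/f)·ew^⊤ is symmetric positive definite. -/
set_option maxHeartbeats 800000


open Matrix

lemma vecMulVec_mulVec' {n : ℕ} (a b x : Fin n → ℝ) :
    (vecMulVec a b) *ᵥ x = (b ⬝ᵥ x) • a := by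
  ext i
  simp [mulVec, vecMulVec_apply, dotProduct, Finset.mul_sum, mul_comm, mul_assoc, mul_left_comm]

/-- If `P` is symmetric positive definite and `f = eᵀP⁻¹w > 0`, then the DFP
quasi-Newton secant update `M = P + h·eeᵀ - (1/f)·weᵀ - (1/f)·ewᵀ`, with
`g = wᵀP⁻¹w` and `h = (f+g)/f²`, is symmetric positive definite. -/
theorem DFP_update_posDef
    (n : ℕ) (P : Matrix (Fin n) (Fin n) ℝ) (hP : P.PosDef)
    (w : Fin n → ℝ) (f g h : ℝ)
    (hf : f = (fun _ => (1 : ℝ)) ⬝ᵥ P⁻¹.mulVec w) (hf0 : 0 < f)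
    (hg : g = w ⬝ᵥ P⁻¹.mulVec w)
    (hh : h = (f + g) / f ^ 2)
    (M : Matrix (Fin n) (Fin n) ℝ)
    (hM : M = P + h • vecMulVec (fun _ => (1 : ℝ)) (fun _ => (1 : ℝ))
      - (1 / f) • vecMulVec w (fun _ => (1 : ℝ))
      - (1 / f) • vecMulVec (fun _ => (1 : ℝ)) w) :
    M.PosDef := by
  have hPsymm : Pᵀ = P := hP.isHermitian
  have hPji : ∀ i j, P j i = P i j := fun i j =>
    congrFun (congrFun hPsymm i) j
  have hw : w ≠ 0 := by
    rintro rfl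
    simp at hf
    exact absurd hf (by linarith)
  have hg0 : 0 < g := by
    rw [hg]
    simpa using hP.inv.dotProduct_mulVec_pos hw
  -- hermitian part
  have hHerm : M.IsHermitian := by
    show Mᴴ = M
    ext i j
    simp only [hM, conjTranspose_apply, Matrix.sub_apply, Matrix.add_apply, Matrix.smul_apply,
      vecMulVec_apply, smul_eq_mul, star_trivial]
    rw [hPji]
    ring
  refine Matrix.PosDef.of_dotProduct_mulVec_pos hHerm fun x hx => ?_
  have hdet : IsUnit P.det := hP.det_pos.ne'.isUnit
  have hPPinv : P * P⁻¹ = 1 := mul_nonsing_inv P hdet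
  set e : Fin n → ℝ := fun _ => (1 : ℝ) with he
  set s : ℝ := e ⬝ᵥ x with hs
  set t : ℝ := w ⬝ᵥ x with ht
  set q : ℝ := x ⬝ᵥ P *ᵥ x with hq
  have hq0 : 0 < q := by simpa [hq] using hP.dotProduct_mulVec_pos hx
  have hxw : x ⬝ᵥ w = t := dotProduct_comm x w
  -- the quadratic form
  have hform : star x ⬝ᵥ M *ᵥ x = q + h * s ^ 2 - (2 / f) * s * t := by
    rw [hM]
    simp only [star_trivial, sub_mulVec, add_mulVec, smul_mulVec,
      vecMulVec_mulVec', dotProduct_sub, dotProduct_add, dotProduct_smul]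
    have hxe : x ⬝ᵥ e = s := dotProduct_comm x e
    simp only [smul_eq_mul, dotProduct_smul, hxe, hxw]
    rw [← hq]
    ring
  rw [hform]
  -- Cauchy-Schwarz : t^2 ≤ g * q
  set u : Fin n → ℝ := P⁻¹ *ᵥ w with hu
  have hPu : P *ᵥ u = w := by
    rw [hu, mulVec_mulVec, hPPinv, one_mulVec]
  have hxPu : x ⬝ᵥ P *ᵥ u = t := by rw [hPu, hxw]
  have huPx : u ⬝ᵥ P *ᵥ x = t := by
    rw [dotProduct_mulVec]
    have : u ᵥ* P = w := by
      conv_lhs => rw [← hPsymm, vecMul_transpose, hPu]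
    rw [this, ht]
  have huPu : u ⬝ᵥ P *ᵥ u = g := by
    rw [hPu, hg, dotProduct_comm]
  have hcs : t ^ 2 ≤ g * q := by
    have key : 0 ≤ (g • x - t • u) ⬝ᵥ P *ᵥ (g • x - t • u) := by
      rcases eq_or_ne (g • x - t • u) 0 with h0 | h0
      · rw [h0]; simp
      · exact le_of_lt (by simpa using hP.dotProduct_mulVec_pos h0)
    have expand : (g • x - t • u) ⬝ᵥ P *ᵥ (g • x - t • u)
        = g * (g * q - t ^ 2) := by
      rw [mulVec_sub, mulVec_smul, mulVec_smul]
      simp only [sub_dotProduct, dotProduct_sub, smul_dotProduct, dotProduct_smul, smul_eq_mul]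
      rw [← hq, hxPu, huPx, huPu]
      ring
    rw [expand] at key
    nlinarith
  have hf2 : (0 : ℝ) < f ^ 2 := by positivity
  have hpos : (0 : ℝ) < f ^ 2 * g := by positivity
  have main : 0 < (q + h * s ^ 2 - 2 / f * s * t) * (f ^ 2 * g) := by
    have expand : (q + h * s ^ 2 - 2 / f * s * t) * (f ^ 2 * g)
        = f ^ 2 * g * q + (f + g) * g * s ^ 2 - 2 * f * g * s * t := by
      rw [hh]
      field_simp
    rw [expand]
    rcases eq_or_ne s 0 with hs0 | hs0
    · rw [hs0]
      nlinarith
    · have hs2 : 0 < s ^ 2 := by positivity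
      nlinarith [sq_nonneg (f * t - g * s), mul_pos (mul_pos hf0 hg0) hs2,
        mul_le_mul_of_nonneg_left hcs hf2.le]
  nlinarith [main, hpos]
end

section
/- Let A ∈ ℝ^{n×n} be a real symmetric matrix whose largest eigenvalue λ_max is strictly positive and all of whose other eigenvalues are ≤ 0 (i.e., A has exactly one positive eigenvalue, counted with multiplicity). Then for every x ∈ ℝ^n, ‖Ax‖² ≥ λ_max · (x^⊤Ax). In particular, for every x with x^⊤Ax > 0, the largest eigenvalue satisfies λ_max ≤ ‖Ax‖²/(x^⊤Ax). -/
open Matrix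

/-- If a real symmetric matrix `A` has exactly one strictly positive eigenvalue
`λ_max` (all other eigenvalues being `≤ 0`), then `‖Ax‖² ≥ λ_max·(xᵀAx)` for every
`x`; in particular `λ_max ≤ ‖Ax‖²/(xᵀAx)` whenever `xᵀAx > 0`. -/
theorem sq_norm_mulVec_ge_posEigenvalue_mul_quadForm
    (n : ℕ) (A : Matrix (Fin n) (Fin n) ℝ) (hA : A.IsHermitian)
    (i0 : Fin n) (hpos : 0 < hA.eigenvalues i0)
    (hneg : ∀ j : Fin n, j ≠ i0 → hA.eigenvalues j ≤ 0) :
    (∀ x : Fin n → ℝ,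
        hA.eigenvalues i0 * (x ⬝ᵥ A.mulVec x) ≤ A.mulVec x ⬝ᵥ A.mulVec x) ∧
    (∀ x : Fin n → ℝ, 0 < x ⬝ᵥ A.mulVec x →
        hA.eigenvalues i0 ≤ (A.mulVec x ⬝ᵥ A.mulVec x) / (x ⬝ᵥ A.mulVec x)) := by
  have key : ∀ x : Fin n → ℝ,
      hA.eigenvalues i0 * (x ⬝ᵥ A.mulVec x) ≤ A.mulVec x ⬝ᵥ A.mulVec x := by
    intro x
    set U : Matrix (Fin n) (Fin n) ℝ :=
      (hA.eigenvectorUnitary : Matrix (Fin n) (Fin n) ℝ) with hUdef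
    have hU : star U * U = 1 := Unitary.coe_star_mul_self hA.eigenvectorUnitary
    set y : Fin n → ℝ := star U *ᵥ x with hy
    set w : Fin n → ℝ := fun i => hA.eigenvalues i * y i with hw
    have hAx : A *ᵥ x = U *ᵥ w := by
      conv_lhs => rw [hA.spectral_theorem, Unitary.conjStarAlgAut_apply]
      have hD : (diagonal (RCLike.ofReal ∘ hA.eigenvalues) : Matrix (Fin n) (Fin n) ℝ) *ᵥ y
          = w := by
        funext i
        simp [mulVec_diagonal, hw]
      rw [mul_assoc, ← mulVec_mulVec, ← mulVec_mulVec, ← hy, hD]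
    have hquad : x ⬝ᵥ A *ᵥ x = ∑ i, hA.eigenvalues i * (y i) ^ 2 := by
      rw [hAx, dotProduct_mulVec]
      have hxU : x ᵥ* U = y := by
        rw [hy, ← mulVec_transpose]
        congr 1
      rw [hxU]
      simp only [dotProduct, hw]
      congr 1; funext i; ring
    have hsq : A *ᵥ x ⬝ᵥ A *ᵥ x = ∑ i, (hA.eigenvalues i) ^ 2 * (y i) ^ 2 := by
      rw [star_eq_conjTranspose] at hU
      rw [hAx, dotProduct_mulVec, ← mulVec_transpose,
        ← conjTranspose_eq_transpose_of_trivial, mulVec_mulVec, hU, one_mulVec]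
      simp only [dotProduct, hw]
      congr 1; funext i; ring
    rw [hquad, hsq, Finset.mul_sum]
    apply Finset.sum_le_sum
    intro i _
    rcases eq_or_ne i i0 with h | h
    · subst h; nlinarith [sq_nonneg (y i)]
    · have h1 := hneg i h
      have h2 : hA.eigenvalues i0 * (hA.eigenvalues i * y i ^ 2) ≤ 0 := by
        have : hA.eigenvalues i * y i ^ 2 ≤ 0 :=
          mul_nonpos_of_nonpos_of_nonneg h1 (sq_nonneg _)
        exact mul_nonpos_of_nonneg_of_nonpos hpos.le this
      nlinarith [sq_nonneg (hA.eigenvalues i * y i)]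
  refine ⟨key, fun x hx => ?_⟩
  rw [le_div_iff₀ hx]
  exact key x
end
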